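/- arXiv:1402.6777 — 2 statements merged into one kernel-verified Lean document; each statement's English description precedes it below -/
import Mathlib

section
/- Let κ : [0,∞) → [0,∞) be nondecreasing and concave with κ(0) = 0, and let g : ℝ^k × ℝ^{k×d} → ℝ^k satisfy: (i) ⟨y₁ − y₂, g(y₁, z) − g(y₂, z)⟩ ≤ κ(|y₁ − y₂|²) for all y₁, y₂, z; (ii) |g(y, z₁) − g(y, z₂)| ≤ μ|z₁ − z₂| for all y, z₁, z₂, where μ ≥ 0; (iii) |g(0,0)| ≤ K for a constant K ≥ 0. Let θ : ℝ^k → [0,1] be any function, let φ ≥ 0 and n ≥ 1, and define h(y, z) = θ(y)·(g(y, q_n(z)) − g(0,0))·(n / max(φ, n)) + g(0,0). Then for all y ∈ ℝ^k and z ∈ ℝ^{k×d}, ⟨y, h(y, z)⟩ ≤ κ(|y|²) + μ|y||z| + K|y|. -/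
/-
Split `⟨y, h(y,z)⟩` as `c ⟨y, g(y, q) − g(0,0)⟩ + ⟨y, g(0,0)⟩` with `q = q_n(z)` and
`c = θ(y) n / max(φ, n) ∈ [0,1]`. Passing through `g(0, q)`, the one-sided condition bounds
`⟨y, g(y,q) − g(0,q)⟩` by `κ(|y|²)` and the Lipschitz condition bounds `⟨y, g(0,q) − g(0,0)⟩` by
`μ|y||q| ≤ μ|y||z|`. This bound is nonnegative, so multiplying by `c ≤ 1` preserves it, and
`⟨y, g(0,0)⟩ ≤ K|y|` by Cauchy–Schwarz.
-/

open scoped RealInnerProductSpace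

noncomputable def qtrunc {E : Type*} [NormedAddCommGroup E] [NormedSpace ℝ E]
    (r : ℝ) (x : E) : E :=
  (r / max ‖x‖ r) • x

lemma div_max_nonneg {b : ℝ} (a : ℝ) (hb : 0 ≤ b) : 0 ≤ b / max a b :=
  div_nonneg hb (hb.trans (le_max_right a b))

lemma div_max_le_one {b : ℝ} (a : ℝ) (hb : 0 ≤ b) : b / max a b ≤ 1 :=
  div_le_one_of_le₀ (le_max_right a b) (hb.trans (le_max_right a b))

lemma norm_qtrunc_le {E : Type*} [NormedAddCommGroup E] [NormedSpace ℝ E] {r : ℝ}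
    (hr : 0 ≤ r) (x : E) : ‖qtrunc r x‖ ≤ ‖x‖ := by
  rw [qtrunc, norm_smul, Real.norm_of_nonneg (div_max_nonneg _ hr)]
  exact mul_le_of_le_one_left (norm_nonneg x) (div_max_le_one _ hr)

lemma inner_sub_apply_zero_zero_le {E F : Type*} [NormedAddCommGroup E] [InnerProductSpace ℝ E]
    [NormedAddCommGroup F] (g : E → F → E) (κ : ℝ → ℝ) {μ : ℝ}
    (hg1 : ∀ y₁ y₂ z, ⟪y₁ - y₂, g y₁ z - g y₂ z⟫ ≤ κ (‖y₁ - y₂‖ ^ 2))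
    (hg2 : ∀ y z₁ z₂, ‖g y z₁ - g y z₂‖ ≤ μ * ‖z₁ - z₂‖) (y : E) (z : F) :
    ⟪y, g y z - g 0 0⟫ ≤ κ (‖y‖ ^ 2) + μ * ‖y‖ * ‖z‖ := by
  have h_one_sided : ⟪y, g y z - g 0 z⟫ ≤ κ (‖y‖ ^ 2) := by simpa using hg1 y 0 z
  have h_lipschitz : ⟪y, g 0 z - g 0 0⟫ ≤ μ * ‖y‖ * ‖z‖ :=
    calc ⟪y, g 0 z - g 0 0⟫ ≤ ‖y‖ * ‖g 0 z - g 0 0‖ := real_inner_le_norm _ _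
      _ ≤ ‖y‖ * (μ * ‖z‖) := by
        simpa using mul_le_mul_of_nonneg_left (hg2 0 z 0) (norm_nonneg y)
      _ = μ * ‖y‖ * ‖z‖ := by ring
  calc ⟪y, g y z - g 0 0⟫ = ⟪y, g y z - g 0 z⟫ + ⟪y, g 0 z - g 0 0⟫ := by
        rw [← inner_add_right, sub_add_sub_cancel]
    _ ≤ κ (‖y‖ ^ 2) + μ * ‖y‖ * ‖z‖ := add_le_add h_one_sided h_lipschitz

theorem truncated_generator_one_sided_bound_general {k d : ℕ} (κ : ℝ → ℝ)
    (hnonneg : ∀ u ∈ Set.Ici (0 : ℝ), 0 ≤ κ u)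
    (g : EuclideanSpace ℝ (Fin k) → EuclideanSpace ℝ (Fin k × Fin d) →
      EuclideanSpace ℝ (Fin k))
    (μ : ℝ) (hμ : 0 ≤ μ)
    (hg1 : ∀ (y₁ y₂ : EuclideanSpace ℝ (Fin k)) (z : EuclideanSpace ℝ (Fin k × Fin d)),
      ⟪y₁ - y₂, g y₁ z - g y₂ z⟫ ≤ κ (‖y₁ - y₂‖ ^ 2))
    (hg2 : ∀ (y : EuclideanSpace ℝ (Fin k)) (z₁ z₂ : EuclideanSpace ℝ (Fin k × Fin d)),
      ‖g y z₁ - g y z₂‖ ≤ μ * ‖z₁ - z₂‖)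
    (K : ℝ) (hgK : ‖g 0 0‖ ≤ K)
    (θ : EuclideanSpace ℝ (Fin k) → ℝ)
    (hθ01 : ∀ y, θ y ∈ Set.Icc (0 : ℝ) 1)
    (φ : ℝ) (n : ℕ)
    (h : EuclideanSpace ℝ (Fin k) → EuclideanSpace ℝ (Fin k × Fin d) →
      EuclideanSpace ℝ (Fin k))
    (hdef : ∀ y z, h y z =
      (θ y * ((n : ℝ) / max φ (n : ℝ))) • (g y (qtrunc (n : ℝ) z) - g 0 0) + g 0 0) :
    ∀ (y : EuclideanSpace ℝ (Fin k)) (z : EuclideanSpace ℝ (Fin k × Fin d)),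
      ⟪y, h y z⟫ ≤ κ (‖y‖ ^ 2) + μ * ‖y‖ * ‖z‖ + K * ‖y‖ := by
  intro y z
  have hB : 0 ≤ κ (‖y‖ ^ 2) + μ * ‖y‖ * ‖z‖ :=
    add_nonneg (hnonneg _ (Set.mem_Ici.mpr (sq_nonneg _))) (by positivity)
  have hq : ⟪y, g y (qtrunc n z) - g 0 0⟫ ≤ κ (‖y‖ ^ 2) + μ * ‖y‖ * ‖z‖ := by
    have := norm_qtrunc_le n.cast_nonneg z
    exact (inner_sub_apply_zero_zero_le g κ hg1 hg2 y _).trans (by gcongr)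
  have hc0 : 0 ≤ θ y * (n / max φ n) := mul_nonneg (hθ01 y).1 (div_max_nonneg φ n.cast_nonneg)
  have hc1 : θ y * (n / max φ n) ≤ 1 := mul_le_one₀ (hθ01 y).2 (div_max_nonneg φ n.cast_nonneg)
    (div_max_le_one φ n.cast_nonneg)
  have hK : ⟪y, g 0 0⟫ ≤ K * ‖y‖ :=
    (real_inner_le_norm _ _).trans (by rw [mul_comm K]; gcongr)
  rw [hdef, inner_add_right, real_inner_smul_right]
  have hcq := (mul_le_mul_of_nonneg_left hq hc0).trans (mul_le_of_le_one_left hB hc1)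
  linarith

/-- The truncated generator
`h(y,z) = θ(y)·(g(y, q_n(z)) − g(0,0))·(n / max(φ, n)) + g(0,0)` satisfies
`⟨y, h(y,z)⟩ ≤ κ(|y|²) + μ|y||z| + K|y|`. -/
theorem truncated_generator_one_sided_bound {k d : ℕ} (κ : ℝ → ℝ)
    (hmono : MonotoneOn κ (Set.Ici 0))
    (hconc : ConcaveOn ℝ (Set.Ici 0) κ)
    (hnonneg : ∀ u ∈ Set.Ici (0 : ℝ), 0 ≤ κ u)
    (h0 : κ 0 = 0)
    (g : EuclideanSpace ℝ (Fin k) → EuclideanSpace ℝ (Fin k × Fin d) →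
      EuclideanSpace ℝ (Fin k))
    (μ : ℝ) (hμ : 0 ≤ μ)
    (hg1 : ∀ (y₁ y₂ : EuclideanSpace ℝ (Fin k)) (z : EuclideanSpace ℝ (Fin k × Fin d)),
      ⟪y₁ - y₂, g y₁ z - g y₂ z⟫ ≤ κ (‖y₁ - y₂‖ ^ 2))
    (hg2 : ∀ (y : EuclideanSpace ℝ (Fin k)) (z₁ z₂ : EuclideanSpace ℝ (Fin k × Fin d)),
      ‖g y z₁ - g y z₂‖ ≤ μ * ‖z₁ - z₂‖)
    (K : ℝ) (hK : 0 ≤ K) (hgK : ‖g 0 0‖ ≤ K)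
    (θ : EuclideanSpace ℝ (Fin k) → ℝ)
    (hθ01 : ∀ y, θ y ∈ Set.Icc (0 : ℝ) 1)
    (φ : ℝ) (hφ0 : 0 ≤ φ) (n : ℕ) (hn : 1 ≤ n)
    (h : EuclideanSpace ℝ (Fin k) → EuclideanSpace ℝ (Fin k × Fin d) →
      EuclideanSpace ℝ (Fin k))
    (hdef : ∀ y z, h y z =
      (θ y * ((n : ℝ) / max φ (n : ℝ))) • (g y (qtrunc (n : ℝ) z) - g 0 0) + g 0 0) :
    ∀ (y : EuclideanSpace ℝ (Fin k)) (z : EuclideanSpace ℝ (Fin k × Fin d)),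
      ⟪y, h y z⟫ ≤ κ (‖y‖ ^ 2) + μ * ‖y‖ * ‖z‖ + K * ‖y‖ :=
  truncated_generator_one_sided_bound_general κ hnonneg g μ hμ hg1 hg2 K hgK θ hθ01 φ n h hdef
end

section
/- Let κ : [0,∞) → [0,∞) be nondecreasing and concave with κ(0) = 0, and let g : ℝ^k × ℝ^{k×d} → ℝ^k satisfy: (i) ⟨y₁ − y₂, g(y₁, z) − g(y₂, z)⟩ ≤ κ(|y₁ − y₂|²) for all y₁, y₂, z; (ii) |g(y, z₁) − g(y, z₂)| ≤ μ|z₁ − z₂| for all y, z₁, z₂, where μ ≥ 0. Let α > 0, φ ≥ 0 with sup_{|y| ≤ α+1} |g(y, 0) − g(0, 0)| ≤ φ, fix y⁰ ∈ ℝ^k with |y⁰| ≤ α + 1, z⁰ ∈ ℝ^{k×d}, and integers 1 ≤ n ≤ m. Define ĝ(y, z) = (g(y + y⁰, q_m(z + z⁰)) − g(0,0))·(m / max(φ, m)) − (g(y⁰, q_n(z⁰)) − g(0,0))·(n / max(φ, n)). Then for all y ∈ ℝ^k and z ∈ ℝ^{k×d}, ⟨y, ĝ(y, z)⟩ ≤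 κ(|y|²) + μ|y|(|z| + 2|z⁰|·1_{|z⁰| > n}) + 2·1_{φ > n}·|y|·(φ + μ|z⁰|). -/
/-!
Write `c_r = r / max(φ, r)` and split `⟨y, ĝ(y, z)⟩` as
`c_m ⟨y, g(y + y⁰, Q_m) − g(y⁰, Q_m)⟩ + c_m ⟨y, g(y⁰, Q_m) − g(y⁰, Q_n)⟩ + (c_m − c_n) ⟨y, g(y⁰, Q_n) − g(0, 0)⟩`
with `Q_m = q_m(z + z⁰)`, `Q_n = q_n(z⁰)`. The scale factors lie in `[0, 1]`, so the first term is
at most `κ(|y|²)` by the one-sided condition. The second is controlled by the Lipschitz bound in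
`z`: when `|z⁰| ≤ n ≤ m`, truncation at level `m` is the metric projection onto a ball containing
`z⁰`, hence does not increase distances to `z⁰`, and `|Q_m − z⁰| ≤ |z|`. In the third term the
two scale factors coincide unless `φ > n`, and `|g(y⁰, Q_n) − g(0, 0)| ≤ φ + μ|z⁰|`.
-/

open scoped RealInnerProductSpace

theorem mul_le_of_mem_Icc_of_le {a b c : ℝ} (ha : a ∈ Set.Icc 0 1) (hb : b ≤ c) (hc : 0 ≤ c) :
    a * b ≤ c :=
  (mul_le_mul_of_nonneg_left hb ha.1).trans (mul_le_of_le_one_left hc ha.2)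

theorem div_max_mem_Icc (a : ℝ) {r : ℝ} (hr : 0 ≤ r) : r / max a r ∈ Set.Icc 0 1 :=
  ⟨div_nonneg hr (hr.trans (le_max_right _ _)),
    div_le_one_of_le₀ (le_max_right _ _) (hr.trans (le_max_right _ _))⟩

theorem div_max_of_le {a r : ℝ} (hr : 0 < r) (h : a ≤ r) : r / max a r = 1 := by
  rw [max_eq_right h, div_self hr.ne']

theorem div_max_sub_div_max_mul_le {φ r s c M : ℝ} (hs : 0 < s) (hsr : s ≤ r) (hc : |c| ≤ M) :
    (r / max φ r - s / max φ s) * c ≤ 2 * (if s < φ then 1 else 0) * M := by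
  split_ifs with hφs
  · obtain ⟨hr0, hr1⟩ := div_max_mem_Icc φ (hs.le.trans hsr)
    obtain ⟨hs0, hs1⟩ := div_max_mem_Icc φ hs.le
    calc (r / max φ r - s / max φ s) * c ≤ |r / max φ r - s / max φ s| * |c| := by
          rw [← abs_mul]; exact le_abs_self _
      _ ≤ 1 * M := mul_le_mul (abs_sub_le_of_nonneg_of_le hr0 hr1 hs0 hs1) hc (abs_nonneg _)
          zero_le_one
      _ ≤ 2 * 1 * M := by linarith [(abs_nonneg c).trans hc]
  · rw [not_lt] at hφs
    rw [div_max_of_le (hs.trans_le hsr) (hφs.trans hsr), div_max_of_le hs hφs]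
    simp

section Truncation

variable {E : Type*} [NormedAddCommGroup E]

theorem qtrunc_of_norm_le [NormedSpace ℝ E] {r : ℝ} (hr : 0 < r) {x : E} (hx : ‖x‖ ≤ r) :
    qtrunc r x = x := by
  rw [qtrunc, div_max_of_le hr hx, one_smul]

theorem norm_qtrunc_le_norm [NormedSpace ℝ E] {r : ℝ} (hr : 0 ≤ r) (x : E) :
    ‖qtrunc r x‖ ≤ ‖x‖ := by
  obtain ⟨h0, h1⟩ := div_max_mem_Icc ‖x‖ hr
  rw [qtrunc, norm_smul, Real.norm_of_nonneg h0]
  exact mul_le_of_le_one_left (norm_nonneg x) h1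

variable [InnerProductSpace ℝ E]

theorem norm_qtrunc_sub_le_of_norm_le {r : ℝ} (hr : 0 < r) (x : E) {w : E} (hw : ‖w‖ ≤ r) :
    ‖qtrunc r x - w‖ ≤ ‖x - w‖ := by
  rcases le_or_gt ‖x‖ r with hx | hx
  · rw [qtrunc_of_norm_le hr hx]
  set t := r / ‖x‖
  have hx0 : 0 < ‖x‖ := hr.trans hx
  have ht0 : 0 ≤ t := div_nonneg hr.le hx0.le
  have ht1 : t ≤ 1 := (div_le_one hx0).2 hx.le
  have htx : t * ‖x‖ = r := div_mul_cancel₀ _ hx0.ne'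
  have hinner : ⟪x, w⟫ ≤ ‖x‖ * r :=
    (real_inner_le_norm x w).trans (mul_le_mul_of_nonneg_left hw (norm_nonneg x))
  rw [qtrunc, max_eq_left hx.le]
  -- `‖x − w‖² − ‖t x − w‖² = (1 − t) (‖x‖² (1 + t) − 2 ⟪x, w⟫)` and `⟪x, w⟫ ≤ r ‖x‖ = t ‖x‖²`
  have hsq : ‖t • x - w‖ ^ 2 ≤ ‖x - w‖ ^ 2 := by
    rw [norm_sub_sq_real, norm_sub_sq_real, norm_smul, real_inner_smul_left,
      Real.norm_of_nonneg ht0]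
    nlinarith [mul_le_mul_of_nonneg_left hinner (sub_nonneg.2 ht1)]
  exact (pow_le_pow_iff_left₀ (norm_nonneg _) (norm_nonneg _) two_ne_zero).1 hsq

theorem norm_qtrunc_add_sub_qtrunc_le {r s : ℝ} (hs : 0 < s) (hsr : s ≤ r) (z z₀ : E) :
    ‖qtrunc r (z + z₀) - qtrunc s z₀‖ ≤ ‖z‖ + 2 * ‖z₀‖ * (if s < ‖z₀‖ then 1 else 0) := by
  split_ifs with hz₀
  · calc ‖qtrunc r (z + z₀) - qtrunc s z₀‖ ≤ ‖qtrunc r (z + z₀)‖ + ‖qtrunc s z₀‖ :=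
          norm_sub_le _ _
      _ ≤ ‖z + z₀‖ + ‖z₀‖ :=
          add_le_add (norm_qtrunc_le_norm (hs.le.trans hsr) _) (norm_qtrunc_le_norm hs.le _)
      _ ≤ ‖z‖ + 2 * ‖z₀‖ * 1 := by linarith [norm_add_le z z₀]
  · rw [not_lt] at hz₀
    rw [qtrunc_of_norm_le hs hz₀, mul_zero, add_zero]
    simpa using norm_qtrunc_sub_le_of_norm_le (hs.trans_le hsr) (z + z₀) (hz₀.trans hsr)

end Truncation

section Generator

variable {E F : Type*} [NormedAddCommGroup E] [SeminormedAddCommGroup F] {g : E → F → E} {μ : ℝ}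

theorem norm_sub_le_of_lipschitz (hg : ∀ y z₁ z₂, ‖g y z₁ - g y z₂‖ ≤ μ * ‖z₁ - z₂‖)
    {φ : ℝ} {y : E} (hφ : ‖g y 0 - g 0 0‖ ≤ φ) (z : F) : ‖g y z - g 0 0‖ ≤ φ + μ * ‖z‖ :=
  calc ‖g y z - g 0 0‖ ≤ ‖g y z - g y 0‖ + ‖g y 0 - g 0 0‖ :=
        norm_sub_le_norm_sub_add_norm_sub _ _ _
    _ ≤ μ * ‖z - 0‖ + φ := add_le_add (hg y z 0) hφ
    _ = φ + μ * ‖z‖ := by rw [sub_zero, add_comm]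

variable [InnerProductSpace ℝ E]

theorem inner_sub_le_of_lipschitz (hg : ∀ y z₁ z₂, ‖g y z₁ - g y z₂‖ ≤ μ * ‖z₁ - z₂‖)
    (x y : E) (z₁ z₂ : F) : ⟪x, g y z₁ - g y z₂⟫ ≤ μ * ‖x‖ * ‖z₁ - z₂‖ :=
  calc ⟪x, g y z₁ - g y z₂⟫ ≤ ‖x‖ * (μ * ‖z₁ - z₂‖) :=
        (real_inner_le_norm _ _).trans (mul_le_mul_of_nonneg_left (hg y z₁ z₂) (norm_nonneg x))
    _ = μ * ‖x‖ * ‖z₁ - z₂‖ := by ring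

end Generator

theorem diff_truncated_generators_one_sided_bound_general {k d : ℕ} (κ : ℝ → ℝ)
    (hnonneg : ∀ u ∈ Set.Ici (0 : ℝ), 0 ≤ κ u)
    (g : EuclideanSpace ℝ (Fin k) → EuclideanSpace ℝ (Fin k × Fin d) →
      EuclideanSpace ℝ (Fin k))
    (μ : ℝ) (hμ : 0 ≤ μ)
    (hg1 : ∀ (y₁ y₂ : EuclideanSpace ℝ (Fin k)) (z : EuclideanSpace ℝ (Fin k × Fin d)),
      ⟪y₁ - y₂, g y₁ z - g y₂ z⟫ ≤ κ (‖y₁ - y₂‖ ^ 2))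
    (hg2 : ∀ (y : EuclideanSpace ℝ (Fin k)) (z₁ z₂ : EuclideanSpace ℝ (Fin k × Fin d)),
      ‖g y z₁ - g y z₂‖ ≤ μ * ‖z₁ - z₂‖)
    (α : ℝ) (φ : ℝ)
    (hφ : ∀ y : EuclideanSpace ℝ (Fin k), ‖y‖ ≤ α + 1 → ‖g y 0 - g 0 0‖ ≤ φ)
    (y₀ : EuclideanSpace ℝ (Fin k)) (hy₀ : ‖y₀‖ ≤ α + 1)
    (z₀ : EuclideanSpace ℝ (Fin k × Fin d))
    (n m : ℕ) (hn : 1 ≤ n) (hnm : n ≤ m)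
    (ghat : EuclideanSpace ℝ (Fin k) → EuclideanSpace ℝ (Fin k × Fin d) →
      EuclideanSpace ℝ (Fin k))
    (hdef : ∀ y z, ghat y z =
      ((m : ℝ) / max φ (m : ℝ)) • (g (y + y₀) (qtrunc (m : ℝ) (z + z₀)) - g 0 0)
        - ((n : ℝ) / max φ (n : ℝ)) • (g y₀ (qtrunc (n : ℝ) z₀) - g 0 0)) :
    ∀ (y : EuclideanSpace ℝ (Fin k)) (z : EuclideanSpace ℝ (Fin k × Fin d)),
      ⟪y, ghat y z⟫ ≤
        κ (‖y‖ ^ 2)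
          + μ * ‖y‖ * (‖z‖ + 2 * ‖z₀‖ * (if (n : ℝ) < ‖z₀‖ then 1 else 0))
          + 2 * (if (n : ℝ) < φ then 1 else 0) * ‖y‖ * (φ + μ * ‖z₀‖) := by
  intro y z
  have hn0 : (0 : ℝ) < n := by exact_mod_cast hn
  have hnm' : (n : ℝ) ≤ m := by exact_mod_cast hnm
  set Qm := qtrunc (m : ℝ) (z + z₀)
  set Qn := qtrunc (n : ℝ) z₀
  set cm := (m : ℝ) / max φ m
  have hcm : cm ∈ Set.Icc 0 1 := div_max_mem_Icc φ (hn0.le.trans hnm')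
  have hsplit : ⟪y, ghat y z⟫ = cm * ⟪y, g (y + y₀) Qm - g y₀ Qm⟫
      + cm * ⟪y, g y₀ Qm - g y₀ Qn⟫ + (cm - n / max φ n) * ⟪y, g y₀ Qn - g 0 0⟫ := by
    rw [hdef]
    simp only [inner_sub_right, inner_smul_right]
    ring
  have hA : cm * ⟪y, g (y + y₀) Qm - g y₀ Qm⟫ ≤ κ (‖y‖ ^ 2) :=
    mul_le_of_mem_Icc_of_le hcm (by simpa using hg1 (y + y₀) y₀ Qm)
      (hnonneg _ (Set.mem_Ici.2 (sq_nonneg _)))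
  have hB : cm * ⟪y, g y₀ Qm - g y₀ Qn⟫
      ≤ μ * ‖y‖ * (‖z‖ + 2 * ‖z₀‖ * (if (n : ℝ) < ‖z₀‖ then 1 else 0)) :=
    mul_le_of_mem_Icc_of_le hcm ((inner_sub_le_of_lipschitz hg2 y y₀ Qm Qn).trans
      (by gcongr; exact norm_qtrunc_add_sub_qtrunc_le hn0 hnm' z z₀)) (by positivity)
  have hC : |⟪y, g y₀ Qn - g 0 0⟫| ≤ ‖y‖ * (φ + μ * ‖z₀‖) :=
    (abs_real_inner_le_norm _ _).trans <| mul_le_mul_of_nonneg_left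
      ((norm_sub_le_of_lipschitz hg2 (hφ y₀ hy₀) Qn).trans
        (by gcongr; exact norm_qtrunc_le_norm hn0.le z₀)) (norm_nonneg y)
  rw [hsplit]
  linarith [div_max_sub_div_max_mul_le (φ := φ) hn0 hnm' hC]

/-- One-sided estimate for the difference of two truncated generators:
`ghat(y,z) = (g(y + y⁰, q_m(z + z⁰)) − g(0,0))·(m / max(φ, m))
          − (g(y⁰, q_n(z⁰)) − g(0,0))·(n / max(φ, n))` satisfies
`⟨y, ghat(y,z)⟩ ≤ κ(|y|²) + μ|y|(|z| + 2|z⁰|·1_{|z⁰| > n}) + 2·1_{φ > n}·|y|·(φ + μ|z⁰|)`. -/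
theorem diff_truncated_generators_one_sided_bound {k d : ℕ} (κ : ℝ → ℝ)
    (hmono : MonotoneOn κ (Set.Ici 0))
    (hconc : ConcaveOn ℝ (Set.Ici 0) κ)
    (hnonneg : ∀ u ∈ Set.Ici (0 : ℝ), 0 ≤ κ u)
    (h0 : κ 0 = 0)
    (g : EuclideanSpace ℝ (Fin k) → EuclideanSpace ℝ (Fin k × Fin d) →
      EuclideanSpace ℝ (Fin k))
    (μ : ℝ) (hμ : 0 ≤ μ)
    (hg1 : ∀ (y₁ y₂ : EuclideanSpace ℝ (Fin k)) (z : EuclideanSpace ℝ (Fin k × Fin d)),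
      ⟪y₁ - y₂, g y₁ z - g y₂ z⟫ ≤ κ (‖y₁ - y₂‖ ^ 2))
    (hg2 : ∀ (y : EuclideanSpace ℝ (Fin k)) (z₁ z₂ : EuclideanSpace ℝ (Fin k × Fin d)),
      ‖g y z₁ - g y z₂‖ ≤ μ * ‖z₁ - z₂‖)
    (α : ℝ) (hα : 0 < α) (φ : ℝ) (hφ0 : 0 ≤ φ)
    (hφ : ∀ y : EuclideanSpace ℝ (Fin k), ‖y‖ ≤ α + 1 → ‖g y 0 - g 0 0‖ ≤ φ)
    (y₀ : EuclideanSpace ℝ (Fin k)) (hy₀ : ‖y₀‖ ≤ α + 1)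
    (z₀ : EuclideanSpace ℝ (Fin k × Fin d))
    (n m : ℕ) (hn : 1 ≤ n) (hnm : n ≤ m)
    (ghat : EuclideanSpace ℝ (Fin k) → EuclideanSpace ℝ (Fin k × Fin d) →
      EuclideanSpace ℝ (Fin k))
    (hdef : ∀ y z, ghat y z =
      ((m : ℝ) / max φ (m : ℝ)) • (g (y + y₀) (qtrunc (m : ℝ) (z + z₀)) - g 0 0)
        - ((n : ℝ) / max φ (n : ℝ)) • (g y₀ (qtrunc (n : ℝ) z₀) - g 0 0)) :
    ∀ (y : EuclideanSpace ℝ (Fin k)) (z : EuclideanSpace ℝ (Fin k × Fin d)),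
      ⟪y, ghat y z⟫ ≤
        κ (‖y‖ ^ 2)
          + μ * ‖y‖ * (‖z‖ + 2 * ‖z₀‖ * (if (n : ℝ) < ‖z₀‖ then 1 else 0))
          + 2 * (if (n : ℝ) < φ then 1 else 0) * ‖y‖ * (φ + μ * ‖z₀‖) :=
  diff_truncated_generators_one_sided_bound_general κ hnonneg g μ hμ hg1 hg2 α φ hφ y₀ hy₀ z₀ n m hn
    hnm ghat hdef
end
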